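/- arXiv:1907.07515 — 4 statements merged into one kernel-verified Lean document; each statement's English description precedes it below -/
import Mathlib

section
/- Let (B_t)_{t≥0} be a standard one-dimensional Brownian motion and let z₀ > 0 and D > 0. Set C₃ = √D/(√π · z₀) and C₄ = z₀²/(4D). Then there exists t₀ > 0 such that for all t ∈ (0, t₀): P( sup_{s ∈ [0,t]} √(2D) · B_s < z₀ ) ≤ 1 − C₃ · t^{1/2} · e^{−C₄/t}. -/
open MeasureTheory ProbabilityTheory Filter Real

/-- A standard one-dimensional Brownian motion: it starts at `0`, has continuous sample
paths on `[0,∞)`, Gaussian increments `B t - B s ~ N(0, t - s)` for `0 ≤ s ≤ t`, and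
independent increments over any increasing sequence of nonnegative times. -/
def IsStdBM {Ω : Type*} [MeasurableSpace Ω] (P : Measure Ω) (B : ℝ → Ω → ℝ) : Prop :=
  (∀ t : ℝ, Measurable (B t)) ∧
  (∀ ω, B 0 ω = 0) ∧
  (∀ ω, ContinuousOn (fun t => B t ω) (Set.Ici 0)) ∧
  (∀ s t : ℝ, 0 ≤ s → s ≤ t →
    P.map (fun ω => B t ω - B s ω) = gaussianReal 0 (t - s).toNNReal) ∧
  (∀ (n : ℕ) (u : Fin (n + 1) → ℝ), (∀ i, 0 ≤ u i) → Monotone u →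
    iIndepFun
      (fun i : Fin n => fun ω => B (u i.succ) ω - B (u i.castSucc) ω) P)

/-- A family of stochastic processes is (mutually) independent if the σ-algebras
generated by the individual processes are independent. -/
def IndepProcs {Ω ι : Type*} [MeasurableSpace Ω] (P : Measure Ω)
    (B : ι → ℝ → Ω → ℝ) : Prop :=
  iIndep (fun i => MeasurableSpace.comap (fun ω => fun t => B i t ω) inferInstance) P

/-!
Put `a = z₀ / √(2D)`, so that the event says that `B` stays below `a` on `[0, t]`, and let `φ_v` be
the `N(0, v)` density. Then `C₃ √t e^{-C₄/t} = φ_t(a) t/a`, the leading term of `P(B_t ≥ a)`.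
The complement of the event contains the disjoint events `{B_t ≥ a}` and
`{B_s ∈ [a, a + ε], B_t - B_s ∈ [-3ε, -2ε]}` with `ε = t/a`, `s = t - ε²`. Mills' inequality gives
`P(B_t ≥ a) ≥ φ_t(a) (t/a - t²/a³)`, and by independence of increments the second event has
probability at least `ε φ_s(a + ε) φ_1(3) ≥ e^{-7/2} φ_1(3) φ_t(a) t/a`, which makes up the deficit
`φ_t(a) t²/a³` as soon as `t/a² ≤ e^{-7/2} φ_1(3)`. No reflection principle is needed.
-/

open Set

lemma integral_Ioi_comp_add_right (f : ℝ → ℝ) (a : ℝ) :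
    ∫ y in Ioi 0, f (y + a) = ∫ x in Ioi a, f x := by
  have h := (measurePreserving_add_right volume a).setIntegral_preimage_emb
    (measurableEmbedding_addRight a) f (Ioi a)
  simpa using h

lemma integrableOn_Ioi_comp_add_right_iff {f : ℝ → ℝ} (a : ℝ) :
    IntegrableOn (fun y => f (y + a)) (Ioi 0) ↔ IntegrableOn f (Ioi a) := by
  have h := (measurePreserving_add_right volume a).integrableOn_comp_preimage
    (measurableEmbedding_addRight a) (f := f) (s := Ioi a)
  simpa [Function.comp_def] using h

lemma integral_pow_mul_exp_neg_mul_Ioi (n : ℕ) {b : ℝ} (hb : 0 < b) :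
    ∫ y in Ioi 0, y ^ n * rexp (-(b * y)) = n.factorial / b ^ (n + 1) := by
  have h := integral_rpow_mul_exp_neg_mul_Ioi (a := n + 1) (by positivity) hb
  rw [add_sub_cancel_right, Real.Gamma_nat_eq_factorial] at h
  simp_rw [rpow_natCast] at h
  rw [h, ← Nat.cast_succ, rpow_natCast, div_pow, one_pow, one_div_mul_eq_div]

lemma integrableOn_pow_mul_exp_neg_mul_Ioi (n : ℕ) {b : ℝ} (hb : 0 < b) :
    IntegrableOn (fun y : ℝ => y ^ n * rexp (-(b * y))) (Ioi 0) := by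
  have h := integrableOn_rpow_mul_exp_neg_mul_rpow (s := n) (p := 1)
    (neg_one_lt_zero.trans_le n.cast_nonneg) one_pos hb
  simpa [neg_mul] using h

lemma div_sq_lt_self {a t : ℝ} (ht : 0 < t) (h2t : 2 * t ≤ a ^ 2) : (t / a) ^ 2 < t := by
  have ha : 0 < a ^ 2 := by linarith
  rw [div_pow, div_lt_iff₀ ha]
  nlinarith

lemma gaussianPDFReal_toNNReal {v : ℝ} (hv : 0 ≤ v) (x : ℝ) :
    gaussianPDFReal 0 v.toNNReal x = (√(2 * π * v))⁻¹ * rexp (-x ^ 2 / (2 * v)) := by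
  rw [gaussianPDFReal, Real.coe_toNNReal v hv, sub_zero]

lemma exp_mul_exp_mul_one_sub_le_exp_neg_add_sq {v a y : ℝ} (hv : 0 < v) :
    rexp (-a ^ 2 / (2 * v)) * (rexp (-(a / v * y)) * (1 - y ^ 2 / (2 * v)))
      ≤ rexp (-(y + a) ^ 2 / (2 * v)) := by
  have hsplit : -(y + a) ^ 2 / (2 * v) = -a ^ 2 / (2 * v) + -(a / v * y) + -(y ^ 2 / (2 * v)) := by
    field_simp; ring
  rw [hsplit, exp_add, exp_add, mul_assoc]
  gcongr
  linarith [add_one_le_exp (-(y ^ 2 / (2 * v)))]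

lemma integral_exp_neg_sq_div_Ioi_ge {v a : ℝ} (hv : 0 < v) (ha : 0 < a) :
    rexp (-a ^ 2 / (2 * v)) * (v / a - v ^ 2 / a ^ 3) ≤ ∫ x in Ioi a, rexp (-x ^ 2 / (2 * v)) := by
  have hb : 0 < a / v := div_pos ha hv
  have hexp := integrableOn_pow_mul_exp_neg_mul_Ioi 0 hb
  have hsq := integrableOn_pow_mul_exp_neg_mul_Ioi 2 hb
  have h0 := integral_pow_mul_exp_neg_mul_Ioi 0 hb
  simp only [pow_zero, one_mul] at hexp h0
  have hgauss : IntegrableOn (fun y => rexp (-(y + a) ^ 2 / (2 * v))) (Ioi 0) := by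
    refine (integrableOn_Ioi_comp_add_right_iff a (f := fun x => rexp (-x ^ 2 / (2 * v)))).2 ?_
    refine (integrable_exp_neg_mul_sq (b := (2 * v)⁻¹) (by positivity)).integrableOn.congr_fun
      (fun x _ => ?_) measurableSet_Ioi
    ring_nf
  have hlower : ∫ y in Ioi 0, rexp (-a ^ 2 / (2 * v)) *
      (rexp (-(a / v * y)) - (2 * v)⁻¹ * (y ^ 2 * rexp (-(a / v * y))))
      = rexp (-a ^ 2 / (2 * v)) * (v / a - v ^ 2 / a ^ 3) := by
    rw [integral_const_mul, integral_sub hexp (hsq.const_mul _), integral_const_mul, h0,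
      integral_pow_mul_exp_neg_mul_Ioi 2 hb]
    norm_num [Nat.factorial]
    field_simp
  rw [← integral_Ioi_comp_add_right, ← hlower]
  refine setIntegral_mono_on ((hexp.sub (hsq.const_mul _)).const_mul _) hgauss measurableSet_Ioi
    fun y _ => le_of_eq_of_le ?_ (exp_mul_exp_mul_one_sub_le_exp_neg_add_sq hv)
  ring

lemma gaussianPDFReal_le_of_sq_le {v : NNReal} {x y : ℝ} (hxy : x ^ 2 ≤ y ^ 2) :
    gaussianPDFReal 0 v y ≤ gaussianPDFReal 0 v x := by
  simp only [gaussianPDFReal, sub_zero]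
  gcongr

lemma gaussianReal_Ici_ge {v a : ℝ} (hv : 0 < v) (ha : 0 < a) :
    ENNReal.ofReal (gaussianPDFReal 0 v.toNNReal a * (v / a - v ^ 2 / a ^ 3))
      ≤ gaussianReal 0 v.toNNReal (Ici a) := by
  rw [gaussianReal_apply_eq_integral 0 (by simpa using hv), integral_Ici_eq_integral_Ioi]
  refine ENNReal.ofReal_le_ofReal ?_
  simp_rw [gaussianPDFReal_toNNReal hv.le, integral_const_mul, mul_assoc]
  gcongr
  exact integral_exp_neg_sq_div_Ioi_ge hv ha

lemma gaussianReal_Icc_ge {v b c M : ℝ} (hv : 0 < v) (hbc : b ≤ c)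
    (hM : ∀ x ∈ Icc b c, x ^ 2 ≤ M ^ 2) :
    ENNReal.ofReal ((c - b) * gaussianPDFReal 0 v.toNNReal M)
      ≤ gaussianReal 0 v.toNNReal (Icc b c) := by
  rw [gaussianReal_apply_eq_integral 0 (by simpa using hv)]
  refine ENNReal.ofReal_le_ofReal ?_
  calc (c - b) * gaussianPDFReal 0 v.toNNReal M
      = ∫ _ in Icc b c, gaussianPDFReal 0 v.toNNReal M := by
        rw [setIntegral_const, Real.volume_real_Icc_of_le hbc, smul_eq_mul]
    _ ≤ ∫ x in Icc b c, gaussianPDFReal 0 v.toNNReal x :=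
        setIntegral_mono_on (integrableOn_const measure_Icc_lt_top.ne)
          (integrable_gaussianPDFReal 0 _).integrableOn measurableSet_Icc
          fun x hx => gaussianPDFReal_le_of_sq_le (hM x hx)

lemma mul_gaussianPDFReal_sq_mul {ε : ℝ} (hε : 0 < ε) (x : ℝ) :
    ε * gaussianPDFReal 0 (ε ^ 2).toNNReal (ε * x) = gaussianPDFReal 0 1 x := by
  rw [gaussianPDFReal_toNNReal (by positivity), gaussianPDFReal, NNReal.coe_one, sub_zero,
    mul_one, Real.sqrt_mul' _ (by positivity), Real.sqrt_sq hε.le]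
  field_simp

lemma exp_mul_gaussianPDFReal_le {a t : ℝ} (ha : 0 < a) (ht : 0 < t) (h2t : 2 * t ≤ a ^ 2) :
    rexp (-(7 / 2)) * gaussianPDFReal 0 t.toNNReal a
      ≤ gaussianPDFReal 0 (t - (t / a) ^ 2).toNNReal (a + t / a) := by
  have hs : 0 < t - (t / a) ^ 2 := sub_pos.2 (div_sq_lt_self ht h2t)
  rw [gaussianPDFReal_toNNReal ht.le, gaussianPDFReal_toNNReal hs.le, mul_left_comm, ← exp_add]
  gcongr
  · nlinarith
  · have key : (a + t / a) ^ 2 / (2 * (t - (t / a) ^ 2)) ≤ a ^ 2 / (2 * t) + 7 / 2 := by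
      rw [div_le_iff₀ (by positivity)]
      field_simp
      nlinarith
    rw [neg_div, neg_div]
    linarith

lemma gaussianReal_Ici_add_mul_Icc_ge {a t : ℝ} (ha : 0 < a) (ht : 0 < t) (h2t : 2 * t ≤ a ^ 2)
    (hta : t ≤ a ^ 2 * (rexp (-(7 / 2)) * gaussianPDFReal 0 1 3)) :
    ENNReal.ofReal (gaussianPDFReal 0 t.toNNReal a * (t / a))
      ≤ gaussianReal 0 t.toNNReal (Ici a)
        + gaussianReal 0 (t - (t / a) ^ 2).toNNReal (Icc a (a + t / a))
          * gaussianReal 0 ((t / a) ^ 2).toNNReal (Icc (-(t / a * 3)) (-(t / a * 2))) := by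
  set ε := t / a with hε_def
  have hε : 0 < ε := div_pos ht ha
  have hs : 0 < t - ε ^ 2 := sub_pos.2 (div_sq_lt_self ht h2t)
  set p := gaussianPDFReal 0 t.toNNReal a
  have hp : 0 ≤ p := gaussianPDFReal_nonneg _ _ _
  have hq : 0 ≤ ε * gaussianPDFReal 0 (t - ε ^ 2).toNNReal (a + ε) :=
    mul_nonneg hε.le (gaussianPDFReal_nonneg _ _ _)
  have hend := gaussianReal_Ici_ge ht ha
  have hhit := gaussianReal_Icc_ge hs (le_add_of_nonneg_right hε.le) (M := a + ε)
    fun x hx => pow_le_pow_left₀ (ha.le.trans hx.1) hx.2 2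
  have hdrop := gaussianReal_Icc_ge (pow_pos hε 2) (b := -(ε * 3)) (c := -(ε * 2)) (M := ε * 3)
    (by linarith) fun x hx => by nlinarith [hx.1, hx.2]
  rw [add_sub_cancel_left] at hhit
  rw [show -(ε * 2) - -(ε * 3) = ε by ring, mul_gaussianPDFReal_sq_mul hε] at hdrop
  have hdeficit : p * (t ^ 2 / a ^ 3)
      ≤ ε * gaussianPDFReal 0 (t - ε ^ 2).toNNReal (a + ε) * gaussianPDFReal 0 1 3 :=
    calc p * (t ^ 2 / a ^ 3) = ε * p * (t / a ^ 2) := by rw [hε_def]; ring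
      _ ≤ ε * p * (rexp (-(7 / 2)) * gaussianPDFReal 0 1 3) := by
        gcongr
        rwa [div_le_iff₀' (by positivity)]
      _ = ε * (rexp (-(7 / 2)) * p) * gaussianPDFReal 0 1 3 := by ring
      _ ≤ _ := by
        gcongr
        · exact gaussianPDFReal_nonneg _ _ _
        · exact exp_mul_gaussianPDFReal_le ha ht h2t
  have hsplit : p * ε ≤ p * (t / a - t ^ 2 / a ^ 3)
      + ε * gaussianPDFReal 0 (t - ε ^ 2).toNNReal (a + ε) * gaussianPDFReal 0 1 3 := by
    linarith
  have hmills : 0 ≤ p * (t / a - t ^ 2 / a ^ 3) := by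
    refine mul_nonneg hp (sub_nonneg.2 ?_)
    rw [div_le_div_iff₀ (by positivity) ha]
    nlinarith [mul_le_mul_of_nonneg_left (show t ≤ a ^ 2 by linarith) (mul_pos ht ha).le]
  calc ENNReal.ofReal (p * ε)
      ≤ ENNReal.ofReal (p * (t / a - t ^ 2 / a ^ 3))
        + ENNReal.ofReal (ε * gaussianPDFReal 0 (t - ε ^ 2).toNNReal (a + ε))
          * ENNReal.ofReal (gaussianPDFReal 0 1 3) := by
        rw [← ENNReal.ofReal_mul hq,
          ← ENNReal.ofReal_add hmills (mul_nonneg hq (gaussianPDFReal_nonneg _ _ _))]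
        exact ENNReal.ofReal_le_ofReal hsplit
    _ ≤ _ := by gcongr

lemma ContinuousOn.lt_of_iSup_Icc_lt {f : ℝ → ℝ} {a b c x : ℝ} (hf : ContinuousOn f (Icc a b))
    (h : ⨆ s : Icc a b, f s < c) (hx : x ∈ Icc a b) : f x < c :=
  (le_ciSup (isCompact_range hf.domRestrict).bddAbove ⟨x, hx⟩).trans_lt h

namespace IsStdBM

variable {Ω : Type*} [MeasurableSpace Ω] {P : Measure Ω} {B : ℝ → Ω → ℝ}

lemma map_eq (hB : IsStdBM P B) {t : ℝ} (ht : 0 ≤ t) : P.map (B t) = gaussianReal 0 t.toNNReal := by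
  simpa [hB.2.1] using hB.2.2.2.1 0 t le_rfl ht

lemma indepFun_increment (hB : IsStdBM P B) {s t : ℝ} (hs : 0 ≤ s) (hst : s ≤ t) :
    IndepFun (B s) (fun ω => B t ω - B s ω) P := by
  have h := hB.2.2.2.2 2 ![0, s, t] (fun i => by fin_cases i <;> simp [hs, hs.trans hst])
    (Fin.monotone_iff_le_succ.2 fun i => by fin_cases i <;> simp [hs, hst])
  simpa [hB.2.1] using h.indepFun (i := 0) (j := 1) (by decide)

lemma setOf_iSup_lt_subset (hB : IsStdBM P B) {k z t : ℝ} (hk : 0 < k) :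
    {ω | ⨆ s : Icc 0 t, k * B s ω < z} ⊆ {ω | ∀ r ∈ Icc 0 t, B r ω < z / k} := by
  intro ω hω r hr
  rw [lt_div_iff₀' hk]
  exact (continuousOn_const.mul ((hB.2.2.1 ω).mono Icc_subset_Ici_self)).lt_of_iSup_Icc_lt hω hr

lemma measure_forall_lt_le [IsProbabilityMeasure P] (hB : IsStdBM P B) {s t a b c d : ℝ}
    (hs : 0 ≤ s) (hst : s ≤ t) (hbd : b + d < a) :
    P {ω | ∀ r ∈ Icc 0 t, B r ω < a}
      ≤ 1 - (gaussianReal 0 t.toNNReal (Ici a)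
        + gaussianReal 0 s.toNNReal (Icc a b) * gaussianReal 0 (t - s).toNNReal (Icc c d)) := by
  have hmeas := hB.1
  set A₁ := B t ⁻¹' Ici a
  set A₂ := B s ⁻¹' Icc a b ∩ (fun ω => B t ω - B s ω) ⁻¹' Icc c d
  have hA₁ : MeasurableSet A₁ := hmeas t measurableSet_Ici
  have hA₂ : MeasurableSet A₂ :=
    (hmeas s measurableSet_Icc).inter (((hmeas t).sub (hmeas s)) measurableSet_Icc)
  have hPA₁ : P A₁ = gaussianReal 0 t.toNNReal (Ici a) := by
    rw [← hB.map_eq (hs.trans hst), Measure.map_apply (hmeas t) measurableSet_Ici]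
  have hPA₂ : P A₂
      = gaussianReal 0 s.toNNReal (Icc a b) * gaussianReal 0 (t - s).toNNReal (Icc c d) := by
    rw [(hB.indepFun_increment hs hst).measure_inter_preimage_eq_mul _ _ measurableSet_Icc
      measurableSet_Icc, ← hB.map_eq hs, ← hB.2.2.2.1 s t hs hst,
      Measure.map_apply (hmeas s) measurableSet_Icc,
      Measure.map_apply (f := fun ω => B t ω - B s ω) ((hmeas t).sub (hmeas s)) measurableSet_Icc]
  have hdisj : Disjoint A₁ A₂ := by
    refine Set.disjoint_left.2 fun ω hω₁ hω₂ => ?_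
    have h₁ : a ≤ B t ω := hω₁
    obtain ⟨⟨-, h₂⟩, -, h₃⟩ := hω₂
    simp only at h₃
    linarith
  have hsub : {ω | ∀ r ∈ Icc 0 t, B r ω < a} ⊆ (A₁ ∪ A₂)ᶜ := by
    rintro ω hω (h₁ | ⟨⟨h₂, -⟩, -⟩)
    · exact (hω t ⟨hs.trans hst, le_rfl⟩).not_ge h₁
    · exact (hω s ⟨hs, hst⟩).not_ge h₂
  calc P {ω | ∀ r ∈ Icc 0 t, B r ω < a} ≤ P (A₁ ∪ A₂)ᶜ := measure_mono hsub
    _ = 1 - (P A₁ + P A₂) := by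
      rw [prob_compl_eq_one_sub (hA₁.union hA₂), measure_union hdisj hA₂]
    _ = _ := by rw [hPA₁, hPA₂]

end IsStdBM

lemma sqrt_div_mul_rpow_mul_exp_eq {z₀ D t : ℝ} (hz : 0 < z₀) (hD : 0 < D) (ht : 0 < t) :
    √D / (√π * z₀) * t ^ ((1 : ℝ) / 2) * rexp (-(z₀ ^ 2 / (4 * D)) / t)
      = gaussianPDFReal 0 t.toNNReal (z₀ / √(2 * D)) * (t / (z₀ / √(2 * D))) := by
  rw [gaussianPDFReal_toNNReal ht.le, ← Real.sqrt_eq_rpow, div_pow, Real.sq_sqrt (by positivity),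
    Real.sqrt_mul' _ ht.le, Real.sqrt_mul' _ hD.le, Real.sqrt_mul (by norm_num)]
  have hst : √t ^ 2 = t := Real.sq_sqrt ht.le
  field_simp
  rw [hst]
  ring_nf

/-- Lemma "bound z" of the paper: for a standard Brownian motion `B`, `z₀ > 0`, `D > 0`,
`C₃ = √D/(√π z₀)` and `C₄ = z₀²/(4D)`, there is `t₀ > 0` such that for `t ∈ (0, t₀)` the
probability that `sup_(s ∈ [0,t]) √(2D) B_s < z₀` is at most `1 - C₃ √t exp (-C₄/t)`. -/
theorem survival_upper_bound {Ω : Type*} [MeasurableSpace Ω] (P : Measure Ω)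
    [IsProbabilityMeasure P] (B : ℝ → Ω → ℝ) (hB : IsStdBM P B)
    (z₀ D : ℝ) (hz : 0 < z₀) (hD : 0 < D) :
    ∃ t₀ > (0:ℝ), ∀ t ∈ Set.Ioo (0:ℝ) t₀,
      P {ω | (⨆ s : Set.Icc (0:ℝ) t, Real.sqrt (2 * D) * B s.1 ω) < z₀}
        ≤ ENNReal.ofReal (1 - (Real.sqrt D / (Real.sqrt π * z₀)) * t ^ ((1:ℝ)/2)
            * Real.exp (-(z₀ ^ 2 / (4 * D)) / t)) := by
  have hk : 0 < √(2 * D) := by positivity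
  set a := z₀ / √(2 * D)
  have ha : 0 < a := div_pos hz hk
  have hφ := gaussianPDFReal_pos 0 1 3 one_ne_zero
  refine ⟨min (a ^ 2 / 2) (a ^ 2 * (rexp (-(7 / 2)) * gaussianPDFReal 0 1 3)), by positivity, ?_⟩
  rintro t ⟨ht, htt⟩
  have h2t : 2 * t ≤ a ^ 2 := by linarith [htt.trans_le (min_le_left _ _)]
  have hε : 0 < t / a := div_pos ht ha
  rw [sqrt_div_mul_rpow_mul_exp_eq hz hD ht,
    ENNReal.ofReal_sub _ (mul_nonneg (gaussianPDFReal_nonneg _ _ _) hε.le), ENNReal.ofReal_one]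
  calc P {ω | ⨆ s : Icc (0 : ℝ) t, √(2 * D) * B s.1 ω < z₀}
      ≤ P {ω | ∀ r ∈ Icc 0 t, B r ω < a} := measure_mono (hB.setOf_iSup_lt_subset hk)
    _ ≤ _ := hB.measure_forall_lt_le (s := t - (t / a) ^ 2) (b := a + t / a) (c := -(t / a * 3))
        (d := -(t / a * 2)) (sub_nonneg.2 (div_sq_lt_self ht h2t).le)
        (sub_le_self _ (by positivity)) (by linarith)
    _ ≤ _ := by
      rw [sub_sub_cancel]
      exact tsub_le_tsub_left (gaussianReal_Ici_add_mul_Icc_ge ha ht h2t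
        (htt.le.trans (min_le_right _ _))) 1
end

section
/- For every c > 0 there exists t₀ > 0 such that for all t ∈ (0, t₀): ∑_{n=0}^{∞} exp(−c·(n + 1/2)²/t) ≤ 2 · exp(−c/(4t)). -/
/-! Since `(n + 1/2)² ≥ n + 1/4`, the `n`-th term is at most `e^{-s/4} (e^{-s})ⁿ` with `s = c/t`,
so the series is dominated by a geometric series of sum `e^{-s/4} / (1 - e^{-s})`; once
`s ≥ log 2`, i.e. `t ≤ c / log 2`, the factor `1 / (1 - e^{-s})` is at most `2`. -/

open Real

namespace Real

lemma exp_neg_mul_add_half_sq_le {s : ℝ} (hs : 0 ≤ s) (n : ℕ) :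
    exp (-s * ((n : ℝ) + 1/2) ^ 2) ≤ exp (-s / 4) * exp (-s) ^ n := by
  rw [← exp_nat_mul, ← exp_add, exp_le_exp]
  nlinarith [mul_nonneg hs (sq_nonneg (n : ℝ))]

lemma tsum_exp_neg_mul_add_half_sq_le {s : ℝ} (hs : 0 < s) :
    ∑' n : ℕ, exp (-s * ((n : ℝ) + 1/2) ^ 2) ≤ exp (-s / 4) * (1 - exp (-s))⁻¹ := by
  have hr0 : 0 ≤ exp (-s) := (exp_pos _).le
  have hr1 : exp (-s) < 1 := exp_lt_one_iff.mpr (neg_neg_of_pos hs)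
  have hgeo : Summable fun n : ℕ ↦ exp (-s / 4) * exp (-s) ^ n :=
    (summable_geometric_of_lt_one hr0 hr1).mul_left _
  have hle := exp_neg_mul_add_half_sq_le hs.le
  calc ∑' n : ℕ, exp (-s * ((n : ℝ) + 1/2) ^ 2)
      ≤ ∑' n : ℕ, exp (-s / 4) * exp (-s) ^ n :=
        (hgeo.of_nonneg_of_le (fun _ ↦ (exp_pos _).le) hle).tsum_le_tsum hle hgeo
    _ = exp (-s / 4) * (1 - exp (-s))⁻¹ := by
        rw [tsum_mul_left, tsum_geometric_of_lt_one hr0 hr1]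

lemma tsum_exp_neg_mul_add_half_sq_le_two_mul {s : ℝ} (hs : log 2 ≤ s) :
    ∑' n : ℕ, exp (-s * ((n : ℝ) + 1/2) ^ 2) ≤ 2 * exp (-s / 4) := by
  have hr : exp (-s) ≤ 2⁻¹ := by
    calc exp (-s) ≤ exp (-log 2) := exp_le_exp.mpr (neg_le_neg hs)
      _ = 2⁻¹ := by rw [exp_neg, exp_log two_pos]
  have hinv : (1 - exp (-s))⁻¹ ≤ 2 := by
    rw [inv_le_comm₀ (by linarith) two_pos]
    linarith
  calc ∑' n : ℕ, exp (-s * ((n : ℝ) + 1/2) ^ 2)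
      ≤ exp (-s / 4) * (1 - exp (-s))⁻¹ :=
        tsum_exp_neg_mul_add_half_sq_le ((log_pos one_lt_two).trans_le hs)
    _ ≤ 2 * exp (-s / 4) := by
        rw [mul_comm]
        exact mul_le_mul_of_nonneg_right hinv (exp_pos _).le

end Real

/-- For every `c > 0` there exists `t₀ > 0` such that for all `t ∈ (0, t₀)`,
`∑_(n=0)^∞ exp (-c (n + 1/2)² / t) ≤ 2 exp (-c/(4t))`. -/
theorem theta_series_bound (c : ℝ) (hc : 0 < c) :
    ∃ t₀ > (0:ℝ), ∀ t ∈ Set.Ioo (0:ℝ) t₀,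
      (∑' n : ℕ, Real.exp (-c * ((n : ℝ) + 1/2) ^ 2 / t)) ≤ 2 * Real.exp (-c / (4 * t)) := by
  have hlog2 : 0 < log 2 := log_pos one_lt_two
  refine ⟨c / log 2, div_pos hc hlog2, fun t ⟨ht, htc⟩ ↦ ?_⟩
  have hs : log 2 ≤ c / t := by
    rw [le_div_iff₀ ht, mul_comm]
    exact ((lt_div_iff₀ hlog2).mp htc).le
  have hrw : ∀ x : ℝ, -c * x / t = -(c / t) * x := fun x ↦ by ring
  simp_rw [hrw, show -c / (4 * t) = -(c / t) / 4 by ring]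
  exact tsum_exp_neg_mul_add_half_sq_le_two_mul hs
end

section
/- For any constants C₁, C₂, C₃, C₄ > 0 and any p ≥ 0: lim_{N→∞} (log N)^p · [ C₁ · (log N)^{1/4} · e^{−C₂·√(log N)} + N · ( 1 − C₃ · (log N)^{−1/4} · e^{−C₄·√(log N)} )^{N−1} ] = 0. -/
/-!
Write `L = log N`. The first term is `C₁ L^(p + 1/4) e^(-C₂ √L)`, which tends to `0` because
`e^(√L)` beats every power of `L`. In the second term, `ε = C₃ L^(-1/4) e^(-C₄ √L)` eventually
exceeds `e^(-L/2) = N^(-1/2)`, since `L/2` dominates `√L`. Hence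
`(1 - ε)^(N-1) ≤ e^(-(N-1) ε) ≤ e^(1 - √N)`, which beats `L^p N ≤ N^(p+1)`.
-/

open Real Filter Topology

lemma tendsto_rpow_mul_exp_neg_mul_sqrt_atTop_nhds_zero (s : ℝ) {c : ℝ} (hc : 0 < c) :
    Tendsto (fun x : ℝ => x ^ s * exp (-c * √x)) atTop (𝓝 0) := by
  refine ((tendsto_rpow_mul_exp_neg_mul_atTop_nhds_zero (2 * s) c hc).comp
    tendsto_sqrt_atTop).congr' ?_
  filter_upwards [eventually_ge_atTop 0] with x hx
  rw [Function.comp_apply, sqrt_eq_rpow, ← rpow_mul hx]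
  ring_nf

lemma eventually_exp_neg_half_le_mul_rpow_mul_exp_neg_mul_sqrt {c₃ : ℝ} (hc₃ : 0 < c₃)
    (c₄ : ℝ) :
    ∀ᶠ x : ℝ in atTop, exp (-(x / 2)) ≤ c₃ * x ^ (-(1 / 4 : ℝ)) * exp (-c₄ * √x) := by
  filter_upwards [eventually_gt_atTop 0,
    tendsto_sqrt_atTop.eventually_ge_atTop (2 * (1 + c₄)),
    (tendsto_rpow_mul_exp_neg_mul_sqrt_atTop_nhds_zero (1 / 4) one_pos).eventually
      (eventually_le_nhds hc₃)] with x hx hsqrt hdecay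
  have hexp_sqrt : exp (-√x) ≤ c₃ * x ^ (-(1 / 4 : ℝ)) := by
    rw [rpow_neg hx.le, le_mul_inv_iff₀ (by positivity), mul_comm]
    simpa using hdecay
  -- `x / 2 = √x * √x / 2 ≥ (1 + c₄) √x` once `√x ≥ 2 (1 + c₄)`
  have hhalf : (1 + c₄) * √x ≤ x / 2 := by
    nlinarith [mul_self_sqrt hx.le, sqrt_nonneg x]
  calc exp (-(x / 2)) ≤ exp (-√x) * exp (-c₄ * √x) := by
        rw [← exp_add, exp_le_exp]; linarith
    _ ≤ c₃ * x ^ (-(1 / 4 : ℝ)) * exp (-c₄ * √x) := by gcongr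

lemma one_sub_pow_le_exp_neg_mul {ε : ℝ} (hε : ε ≤ 1) (n : ℕ) :
    (1 - ε) ^ n ≤ exp (-(n * ε)) := by
  calc (1 - ε) ^ n ≤ exp (-ε) ^ n := pow_le_pow_left₀ (by linarith) (one_sub_le_exp_neg ε) n
    _ = exp (-(n * ε)) := by rw [← exp_nat_mul]; ring_nf

lemma tendsto_rpow_mul_one_sub_pow_atTop_nhds_zero (q : ℝ) {ε : ℕ → ℝ}
    (hε_lower : ∀ᶠ N : ℕ in atTop, (√N)⁻¹ ≤ ε N) (hε_le_one : ∀ᶠ N : ℕ in atTop, ε N ≤ 1) :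
    Tendsto (fun N : ℕ => (N : ℝ) ^ q * (1 - ε N) ^ (N - 1)) atTop (𝓝 0) := by
  have hbound := ((tendsto_rpow_mul_exp_neg_mul_sqrt_atTop_nhds_zero q one_pos).comp
    tendsto_natCast_atTop_atTop).const_mul (exp 1)
  rw [mul_zero] at hbound
  refine squeeze_zero' ?_ ?_ hbound
  · filter_upwards [hε_le_one] with N hN
    have : 0 ≤ 1 - ε N := sub_nonneg.mpr hN
    positivity
  filter_upwards [hε_lower, hε_le_one, eventually_ge_atTop 1] with N hlower hle hN
  have hN' : (1 : ℝ) ≤ N := by exact_mod_cast hN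
  have hsqrt_pos : 0 < √(N : ℝ) := by positivity
  have hexponent : √(N : ℝ) - 1 ≤ ((N - 1 : ℕ) : ℝ) * ε N := by
    rw [Nat.cast_sub hN, Nat.cast_one]
    calc √(N : ℝ) - 1 ≤ ((N : ℝ) - 1) * (√N)⁻¹ := by
          rw [sub_mul, one_mul, ← div_eq_mul_inv, div_sqrt]
          gcongr
          rw [inv_le_one₀ hsqrt_pos]
          exact one_le_sqrt.mpr hN'
      _ ≤ ((N : ℝ) - 1) * ε N := by gcongr
  calc (N : ℝ) ^ q * (1 - ε N) ^ (N - 1) ≤ (N : ℝ) ^ q * exp (-(((N - 1 : ℕ) : ℝ) * ε N)) := by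
        gcongr
        exact one_sub_pow_le_exp_neg_mul hle _
    _ ≤ (N : ℝ) ^ q * exp (1 - √N) := by gcongr; linarith
    _ = exp 1 * ((N : ℝ) ^ q * exp (-1 * √N)) := by
        rw [sub_eq_add_neg, exp_add]; ring_nf

lemma tendsto_log_rpow_mul_mul_one_sub_pow_atTop_nhds_zero {p : ℝ} (hp : 0 ≤ p) {ε : ℕ → ℝ}
    (hε_lower : ∀ᶠ N : ℕ in atTop, (√N)⁻¹ ≤ ε N) (hε_le_one : ∀ᶠ N : ℕ in atTop, ε N ≤ 1) :
    Tendsto (fun N : ℕ => log N ^ p * (N * (1 - ε N) ^ (N - 1))) atTop (𝓝 0) := by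
  have hnonneg : ∀ᶠ N : ℕ in atTop, 0 ≤ 1 - ε N := hε_le_one.mono fun _ ↦ sub_nonneg.mpr
  refine squeeze_zero' ?_ ?_
    (tendsto_rpow_mul_one_sub_pow_atTop_nhds_zero (p + 1) hε_lower hε_le_one)
  · filter_upwards [hnonneg] with N hN
    have := log_natCast_nonneg N
    positivity
  filter_upwards [hnonneg] with N hN
  rw [rpow_add_one' (Nat.cast_nonneg N) (by positivity), mul_assoc]
  have := log_natCast_nonneg N
  gcongr
  exact log_le_self (Nat.cast_nonneg N)

theorem key_estimate_general (C₁ C₂ C₃ C₄ : ℝ) (h2 : 0 < C₂) (h3 : 0 < C₃)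
    (h4 : 0 < C₄) (p : ℝ) (hp : 0 ≤ p) :
    Tendsto (fun N : ℕ =>
      (Real.log N) ^ p *
        (C₁ * (Real.log N) ^ ((1:ℝ)/4) * Real.exp (-C₂ * Real.sqrt (Real.log N))
          + (N : ℝ) * (1 - C₃ * (Real.log N) ^ (-(1:ℝ)/4)
              * Real.exp (-C₄ * Real.sqrt (Real.log N))) ^ (N - 1)))
      atTop (nhds 0) := by
  have hlog : Tendsto (fun N : ℕ => log N) atTop atTop :=
    tendsto_log_atTop.comp tendsto_natCast_atTop_atTop
  set ε : ℕ → ℝ := fun N => C₃ * log N ^ (-(1:ℝ)/4) * exp (-C₄ * √(log N)) with hε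
  have hA : Tendsto (fun N : ℕ => log N ^ p * (C₁ * log N ^ ((1:ℝ)/4) * exp (-C₂ * √(log N))))
      atTop (𝓝 0) := by
    have h := ((tendsto_rpow_mul_exp_neg_mul_sqrt_atTop_nhds_zero (p + 1/4) h2).comp
      hlog).const_mul C₁
    rw [mul_zero] at h
    refine h.congr' ?_
    filter_upwards [hlog.eventually_gt_atTop 0] with N hN
    rw [Function.comp_apply, rpow_add hN]
    ring
  have hε_lower : ∀ᶠ N : ℕ in atTop, (√N)⁻¹ ≤ ε N := by
    filter_upwards [eventually_gt_atTop 0,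
      hlog.eventually (eventually_exp_neg_half_le_mul_rpow_mul_exp_neg_mul_sqrt h3 C₄)]
      with N hN h
    rw [← exp_log (by exact_mod_cast hN : (0 : ℝ) < N), ← exp_half, ← exp_neg]
    simpa only [hε, neg_div] using h
  have hε_le_one : ∀ᶠ N : ℕ in atTop, ε N ≤ 1 := by
    have h := ((tendsto_rpow_mul_exp_neg_mul_sqrt_atTop_nhds_zero (-(1:ℝ)/4) h4).comp
      hlog).const_mul C₃
    rw [mul_zero] at h
    filter_upwards [h.eventually (eventually_le_nhds one_pos)] with N hN
    simpa only [hε, Function.comp_apply, mul_assoc] using hN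
  simpa only [mul_add, add_zero] using
    hA.add (tendsto_log_rpow_mul_mul_one_sub_pow_atTop_nhds_zero hp hε_lower hε_le_one)

/-- The key asymptotic estimate in the proof of Theorem 1 of the paper: for any
`C₁, C₂, C₃, C₄ > 0` and `p ≥ 0`,
`(log N)^p [C₁ (log N)^(1/4) e^(-C₂ √(log N)) + N (1 - C₃ (log N)^(-1/4) e^(-C₄ √(log N)))^(N-1)] → 0`
as `N → ∞`. -/
theorem key_estimate (C₁ C₂ C₃ C₄ : ℝ) (h1 : 0 < C₁) (h2 : 0 < C₂) (h3 : 0 < C₃)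
    (h4 : 0 < C₄) (p : ℝ) (hp : 0 ≤ p) :
    Tendsto (fun N : ℕ =>
      (Real.log N) ^ p *
        (C₁ * (Real.log N) ^ ((1:ℝ)/4) * Real.exp (-C₂ * Real.sqrt (Real.log N))
          + (N : ℝ) * (1 - C₃ * (Real.log N) ^ (-(1:ℝ)/4)
              * Real.exp (-C₄ * Real.sqrt (Real.log N))) ^ (N - 1)))
      atTop (nhds 0) :=
  key_estimate_general C₁ C₂ C₃ C₄ h2 h3 h4 p hp
end

section
/- Let C₁, C₂, C₃, C₄ > 0 and t₀ > 0 be constants, and let S₀ : (0,∞) → [0,1] be a function satisfying S₀(t) ≤ 1 − C₃·t^{1/2}·e^{−C₄/t} for all t ∈ (0, t₀). For each N ≥ 1, let τ_{N,1}, …, τ_{N,N} be i.i.d. nonnegative random variables on a probability space with common survival function P(τ_{N,1} > t) = S₀(t), let T_N = min{τ_{N,1}, …, τ_{N,N}}, and let σ_N be any nonnegative random variable on the same probability space satisfying P(σ_N ≤ t) ≤ C₁·t^{−1/2}·e^{−C₂/t} for all t ∈ (0, t₀). Then for every p ≥ 0: lim_{N→∞} (log N)^p · P( σ_N ≤ T_N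 ) = 0. -/
/-!
Split the event at the deterministic time `δ = (log N)^(-1/2)`: either `σ_N ≤ δ`, which has
probability at most `C₁ δ^(-1/2) e^(-C₂/δ)`, or all `τ_{N,i}` exceed `δ`, which by independence
has probability `S₀(δ)^N ≤ exp (-N C₃ δ^(1/2) e^(-C₄/δ))`. In the variable `u = 1/δ = √(log N)`,
so that `N = e^(u²)`, the first term times `(log N)^p` is `C₁ u^(2p+1/2) e^(-C₂ u) → 0`, while
`N C₃ δ^(1/2) e^(-C₄/δ) = C₃ u^(-1/2) e^(u² - C₄ u)` eventually exceeds `u² = log N`, so the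
second term times `(log N)^p` is at most `(log N)^p / N → 0`.
-/

open MeasureTheory ProbabilityTheory Real Filter Topology

section Decomposition

variable {Ω ι : Type*} [MeasurableSpace Ω] {σ : Ω → ℝ} {τ : ι → Ω → ℝ}

theorem measure_le_iInf_le_add [Finite ι] (μ : Measure Ω) (δ : ℝ) :
    μ {ω | σ ω ≤ ⨅ i, τ i ω} ≤ μ {ω | σ ω ≤ δ} + μ (⋂ i, {ω | δ < τ i ω}) := by
  refine (measure_mono fun ω (hω : σ ω ≤ ⨅ i, τ i ω) => ?_).trans (measure_union_le _ _)
  by_cases hσδ : σ ω ≤ δ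
  · exact Or.inl hσδ
  · exact Or.inr <| Set.mem_iInter.2 fun i =>
      (not_le.1 hσδ).trans_le (hω.trans (ciInf_le (Set.finite_range fun i => τ i ω).bddBelow i))

theorem ofReal_pow_le_ofReal_exp_neg_mul {s a : ℝ} (h : s ≤ 1 - a) (n : ℕ) :
    ENNReal.ofReal s ^ n ≤ ENNReal.ofReal (exp (-(n * a))) := by
  calc ENNReal.ofReal s ^ n ≤ ENNReal.ofReal (exp (-a)) ^ n := by
        gcongr
        linarith [add_one_le_exp (-a)]
    _ = ENNReal.ofReal (exp (-(n * a))) := by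
        rw [← ENNReal.ofReal_pow (exp_nonneg _), ← exp_nat_mul, mul_neg]

theorem ProbabilityTheory.iIndepFun.toReal_measure_le_iInf_le [Fintype ι] {μ : Measure Ω}
    (hτ : iIndepFun τ μ) {δ A S a : ℝ}
    (hA : 0 ≤ A) (hσ : μ {ω | σ ω ≤ δ} ≤ ENNReal.ofReal A)
    (hτS : ∀ i, μ {ω | δ < τ i ω} = ENNReal.ofReal S) (hS : S ≤ 1 - a) :
    (μ {ω | σ ω ≤ ⨅ i, τ i ω}).toReal ≤ A + exp (-(Fintype.card ι * a)) := by
  have hsurvive : μ (⋂ i, {ω | δ < τ i ω}) ≤ ENNReal.ofReal (exp (-(Fintype.card ι * a))) := by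
    rw [hτ.meas_iInter (s := fun i => {ω | δ < τ i ω})
      fun i => ⟨Set.Ioi δ, measurableSet_Ioi, rfl⟩]
    simpa only [hτS, Finset.prod_const, Finset.card_univ] using
      ofReal_pow_le_ofReal_exp_neg_mul hS _
  have hsplit := (measure_le_iInf_le_add μ δ).trans (add_le_add hσ hsurvive)
  rw [← ENNReal.ofReal_add hA (exp_nonneg _)] at hsplit
  exact ENNReal.toReal_le_of_le_ofReal (by positivity) hsplit

end Decomposition

theorem tendsto_sq_rpow_mul_inv_rpow_mul_exp_neg_div_inv (p C₁ : ℝ) {C₂ : ℝ} (hC₂ : 0 < C₂) :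
    Tendsto (fun u : ℝ => (u ^ 2) ^ p * (C₁ * u⁻¹ ^ (-(1:ℝ)/2) * exp (-C₂ / u⁻¹)))
      atTop (𝓝 0) := by
  have := (tendsto_rpow_mul_exp_neg_mul_atTop_nhds_zero (2 * p + 1/2) C₂ hC₂).const_mul C₁
  rw [mul_zero] at this
  refine this.congr' ?_
  filter_upwards [eventually_gt_atTop 0] with u hu
  rw [← rpow_natCast, ← rpow_mul hu.le, inv_rpow hu.le, ← rpow_neg hu.le, div_inv_eq_mul,
    rpow_add hu]
  push_cast
  ring_nf

theorem eventually_sq_le_exp_sq_mul_inv_rpow_mul_exp_neg_div_inv {C₃ : ℝ} (C₄ : ℝ)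
    (hC₃ : 0 < C₃) :
    ∀ᶠ u : ℝ in atTop, u ^ 2 ≤ exp (u ^ 2) * (C₃ * u⁻¹ ^ ((1:ℝ)/2) * exp (-C₄ / u⁻¹)) := by
  have hsmall := (tendsto_rpow_mul_exp_neg_mul_atTop_nhds_zero (5/2) 1 one_pos).eventually
    (eventually_le_nhds hC₃)
  filter_upwards [hsmall, eventually_ge_atTop (C₄ + 1), eventually_gt_atTop 0]
    with u hsmall hC₄ hu
  have hroot : 0 < u ^ ((1:ℝ)/2) := rpow_pos_of_pos hu _
  have hpoly : u ^ 2 * u ^ ((1:ℝ)/2) ≤ C₃ * exp u :=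
    calc u ^ 2 * u ^ ((1:ℝ)/2) = u ^ ((5:ℝ)/2) * exp (-1 * u) * exp u := by
          rw [mul_assoc, ← exp_add, ← rpow_natCast, ← rpow_add hu]
          norm_num
      _ ≤ C₃ * exp u := by gcongr
  have hexp : exp u ≤ exp (u ^ 2) * exp (-C₄ / u⁻¹) := by
    rw [div_inv_eq_mul, ← exp_add, exp_le_exp]
    nlinarith
  calc u ^ 2 ≤ C₃ * exp u * (u ^ ((1:ℝ)/2))⁻¹ := by rwa [le_mul_inv_iff₀ hroot]
    _ ≤ C₃ * (exp (u ^ 2) * exp (-C₄ / u⁻¹)) * (u ^ ((1:ℝ)/2))⁻¹ := by gcongr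
    _ = exp (u ^ 2) * (C₃ * u⁻¹ ^ ((1:ℝ)/2) * exp (-C₄ / u⁻¹)) := by
        rw [inv_rpow hu.le]
        ring

theorem tendsto_sq_rpow_mul_exp_neg_exp_sq_mul (p : ℝ) {C₃ : ℝ} (C₄ : ℝ) (hC₃ : 0 < C₃) :
    Tendsto (fun u : ℝ =>
        (u ^ 2) ^ p * exp (-(exp (u ^ 2) * (C₃ * u⁻¹ ^ ((1:ℝ)/2) * exp (-C₄ / u⁻¹)))))
      atTop (𝓝 0) := by
  have hlim := (tendsto_rpow_mul_exp_neg_mul_atTop_nhds_zero p 1 one_pos).comp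
    (tendsto_pow_atTop two_ne_zero)
  refine squeeze_zero' (.of_forall fun u => by positivity) ?_ hlim
  filter_upwards [eventually_sq_le_exp_sq_mul_inv_rpow_mul_exp_neg_div_inv C₄ hC₃] with u hu
  simp only [Function.comp_apply, neg_mul, one_mul]
  gcongr

theorem deviation_probability_decay_general (C₁ C₂ C₃ C₄ t₀ : ℝ)
    (h1 : 0 < C₁) (h2 : 0 < C₂) (h3 : 0 < C₃) (ht₀ : 0 < t₀)
    (S₀ : ℝ → ℝ)
    (hS₀ : ∀ t ∈ Set.Ioo (0:ℝ) t₀, S₀ t ≤ 1 - C₃ * t ^ ((1:ℝ)/2) * Real.exp (-C₄ / t))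
    (Ω : ℕ → Type*) [∀ N, MeasurableSpace (Ω N)]
    (P : ∀ N, Measure (Ω N))
    (τ : ∀ N, Fin N → Ω N → ℝ)
    (hτindep : ∀ N, iIndepFun (τ N) (P N))
    (hτsurv : ∀ N (i : Fin N), ∀ t > (0:ℝ),
      P N {ω | t < τ N i ω} = ENNReal.ofReal (S₀ t))
    (σ : ∀ N, Ω N → ℝ)
    (hσ : ∀ N, ∀ t ∈ Set.Ioo (0:ℝ) t₀,
      P N {ω | σ N ω ≤ t} ≤ ENNReal.ofReal (C₁ * t ^ (-(1:ℝ)/2) * Real.exp (-C₂ / t)))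
    (p : ℝ) :
    Tendsto (fun N : ℕ =>
        (Real.log N) ^ p * (P N {ω | σ N ω ≤ ⨅ i, τ N i ω}).toReal)
      atTop (nhds 0) := by
  set u : ℕ → ℝ := fun N => √(log N)
  have hu : Tendsto u atTop atTop :=
    tendsto_sqrt_atTop.comp (tendsto_log_atTop.comp tendsto_natCast_atTop_atTop)
  have hδ : ∀ᶠ N in atTop, (u N)⁻¹ ∈ Set.Ioo 0 t₀ :=
    (tendsto_inv_atTop_nhdsGT_zero.comp hu).eventually (Ioo_mem_nhdsGT ht₀)
  have hlim := ((tendsto_sq_rpow_mul_inv_rpow_mul_exp_neg_div_inv p C₁ h2).add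
    (tendsto_sq_rpow_mul_exp_neg_exp_sq_mul p C₄ h3)).comp hu
  rw [add_zero] at hlim
  refine squeeze_zero' (.of_forall fun N => by positivity) ?_ hlim
  filter_upwards [hδ, eventually_ge_atTop 1] with N hδN hN
  have hlog : log N = u N ^ 2 := (sq_sqrt (log_natCast_nonneg N)).symm
  have hN : (N : ℝ) = exp (u N ^ 2) := by rw [← hlog, exp_log (by exact_mod_cast hN)]
  have hbound := (hτindep N).toReal_measure_le_iInf_le (by positivity) (hσ N _ hδN)
    (fun i => hτsurv N i _ hδN.1) (hS₀ _ hδN)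
  rw [Fintype.card_fin, hN] at hbound
  rw [Function.comp_apply, hlog, ← mul_add]
  exact mul_le_mul_of_nonneg_left hbound (by positivity)

/-- The abstract mechanism behind Theorem 1 of the paper: if `T_N` is the minimum of `N`
i.i.d. nonnegative random variables whose common survival function `S₀` satisfies
`S₀(t) ≤ 1 - C₃ √t e^(-C₄/t)` for small `t`, and `σ_N` are nonnegative random variables
with `P(σ_N ≤ t) ≤ C₁ t^(-1/2) e^(-C₂/t)` for small `t`, then
`(log N)^p P(σ_N ≤ T_N) → 0` as `N → ∞` for every `p ≥ 0`. -/
theorem deviation_probability_decay (C₁ C₂ C₃ C₄ t₀ : ℝ)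
    (h1 : 0 < C₁) (h2 : 0 < C₂) (h3 : 0 < C₃) (h4 : 0 < C₄) (ht₀ : 0 < t₀)
    (S₀ : ℝ → ℝ) (hS₀mem : ∀ t > (0:ℝ), S₀ t ∈ Set.Icc (0:ℝ) 1)
    (hS₀ : ∀ t ∈ Set.Ioo (0:ℝ) t₀, S₀ t ≤ 1 - C₃ * t ^ ((1:ℝ)/2) * Real.exp (-C₄ / t))
    (Ω : ℕ → Type*) [∀ N, MeasurableSpace (Ω N)]
    (P : ∀ N, Measure (Ω N)) [∀ N, IsProbabilityMeasure (P N)]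
    (τ : ∀ N, Fin N → Ω N → ℝ)
    (hτmeas : ∀ N i, Measurable (τ N i))
    (hτnonneg : ∀ N i ω, 0 ≤ τ N i ω)
    (hτindep : ∀ N, iIndepFun (τ N) (P N))
    (hτsurv : ∀ N (i : Fin N), ∀ t > (0:ℝ),
      P N {ω | t < τ N i ω} = ENNReal.ofReal (S₀ t))
    (σ : ∀ N, Ω N → ℝ)
    (hσmeas : ∀ N, Measurable (σ N))
    (hσnonneg : ∀ N ω, 0 ≤ σ N ω)
    (hσ : ∀ N, ∀ t ∈ Set.Ioo (0:ℝ) t₀,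
      P N {ω | σ N ω ≤ t} ≤ ENNReal.ofReal (C₁ * t ^ (-(1:ℝ)/2) * Real.exp (-C₂ / t)))
    (p : ℝ) (hp : 0 ≤ p) :
    Tendsto (fun N : ℕ =>
        (Real.log N) ^ p * (P N {ω | σ N ω ≤ ⨅ i, τ N i ω}).toReal)
      atTop (nhds 0) :=
  deviation_probability_decay_general C₁ C₂ C₃ C₄ t₀ h1 h2 h3 ht₀ S₀ hS₀ Ω P τ hτindep hτsurv σ hσ p
end
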